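/- There is an absolute constant C with the following property: for every t > 0, every n ∈ ℕ, every family u₁,…,uₙ ∈ L¹(ℝ³;ℂ) ∩ L²(ℝ³;ℂ), and every orthonormal family v₁,…,vₙ in L²(ℝ³;ℂ), one has ‖Σ_{k=1}^{n}(e^{itΔ}u_k)·v_k‖_{L²(ℝ³)} ≤ C t^{−3/2} ∫_{ℝ³} (Σ_{k=1}^{n}|u_k(y)|²)^{1/2} dy, where for u ∈ L¹(ℝ³) we define (e^{itΔ}u)(x) := (4πt)^{−3/2} ∫_{ℝ³} exp(i‖x−y‖²/(4t)) u(y) dy (the free Schrödinger propagator up to an irrelevant unimodular constant). -/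

import Mathlib

/-!
Write `F = ∑ₖ (T uₖ) vₖ`, where `T` is the integral operator with kernel `K(x, y)`.
Pairing `F` with itself and applying Fubini to each term gives
`‖F‖² = ∫ ∑ₖ uₖ(y) ⟪F · conj K(·, y), vₖ⟫ dy`.
For fixed `y`, Cauchy–Schwarz in `ℓ²` and Bessel's inequality bound the integrand by
`(∑ₖ |uₖ(y)|²)^{1/2} ‖F · conj K(·, y)‖ ≤ (∑ₖ |uₖ(y)|²)^{1/2} · sup |K| · ‖F‖`,
so `‖F‖ ≤ sup |K| · ∫ (∑ₖ |uₖ|²)^{1/2}`. The Schrödinger kernel has `|K| = (4πt)^{-3/2}`.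
-/

open MeasureTheory

noncomputable section

abbrev E3 := EuclideanSpace ℝ (Fin 3)

/-- The free Schrödinger propagator (up to an irrelevant unimodular constant):
`(e^{itΔ}u)(x) = (4πt)^{−3/2} ∫ exp(i‖x−y‖²/(4t)) u(y) dy`. -/
def freeProp (t : ℝ) (u : E3 → ℂ) (x : E3) : ℂ :=
  ((4 * Real.pi * t) ^ (-(3 : ℝ) / 2) : ℝ) *
    ∫ y : E3, Complex.exp (Complex.I * ((‖x - y‖ ^ 2 / (4 * t) : ℝ) : ℂ)) * u y

open scoped ComplexConjugate InnerProductSpace ENNReal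
open Function (uncurry)

namespace Orthonormal

theorem norm_sum_mul_inner_le {𝕜 E ι : Type*} [RCLike 𝕜] [NormedAddCommGroup E]
    [InnerProductSpace 𝕜 E] [Fintype ι] {v : ι → E} (hv : Orthonormal 𝕜 v) (c : ι → 𝕜) (w : E) :
    ‖∑ k, c k * ⟪w, v k⟫_𝕜‖ ≤ √(∑ k, ‖c k‖ ^ 2) * ‖w‖ :=
  calc ‖∑ k, c k * ⟪w, v k⟫_𝕜‖ ≤ ∑ k, ‖c k‖ * ‖⟪v k, w⟫_𝕜‖ := by
        refine (norm_sum_le _ _).trans_eq ?_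
        simp only [norm_mul, norm_inner_symm]
    _ ≤ √(∑ k, ‖c k‖ ^ 2) * √(∑ k, ‖⟪v k, w⟫_𝕜‖ ^ 2) := Real.sum_mul_le_sqrt_mul_sqrt _ _ _
    _ ≤ √(∑ k, ‖c k‖ ^ 2) * ‖w‖ := by
        gcongr
        exact (Real.sqrt_le_left (norm_nonneg _)).mpr (hv.sum_inner_products_le w)

end Orthonormal

namespace MeasureTheory

variable {𝕜 : Type*} [RCLike 𝕜]

section

variable {α : Type*} [MeasurableSpace α] {μ : Measure α}

theorem MemLp.norm_toLp_eq_sqrt {E : Type*} [NormedAddCommGroup E] {f : α → E}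
    (hf : MemLp f 2 μ) : ‖hf.toLp f‖ = √(∫ x, ‖f x‖ ^ 2 ∂μ) := by
  rw [Lp.norm_toLp, hf.eLpNorm_eq_integral_rpow_norm two_ne_zero ENNReal.ofNat_ne_top,
    ENNReal.toReal_ofReal (by positivity), Real.sqrt_eq_rpow]
  norm_num

theorem MemLp.inner_toLp_toLp {E : Type*} [NormedAddCommGroup E] [InnerProductSpace 𝕜 E]
    {f g : α → E} (hf : MemLp f 2 μ) (hg : MemLp g 2 μ) :
    ⟪hf.toLp f, hg.toLp g⟫_𝕜 = ∫ x, ⟪f x, g x⟫_𝕜 ∂μ := by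
  rw [L2.inner_def]
  refine integral_congr_ae ?_
  filter_upwards [hf.coeFn_toLp, hg.coeFn_toLp] with x hfx hgx
  rw [hfx, hgx]

theorem orthonormal_toLp_iff {ι : Type*} [DecidableEq ι] {v : ι → α → 𝕜}
    (hv : ∀ k, MemLp (v k) 2 μ) :
    Orthonormal 𝕜 (fun k => (hv k).toLp (v k)) ↔
      ∀ j k, ∫ x, conj (v j x) * v k x ∂μ = if j = k then 1 else 0 := by
  simp only [orthonormal_iff_ite, MemLp.inner_toLp_toLp, RCLike.inner_apply']

theorem integral_conj_mul_self (f : α → 𝕜) :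
    ∫ x, conj (f x) * f x ∂μ = ((∫ x, ‖f x‖ ^ 2 ∂μ : ℝ) : 𝕜) := by
  simp only [RCLike.conj_mul, ← RCLike.ofReal_pow, integral_ofReal]

theorem integrable_sqrt_sum_sq_norm {E : Type*} [NormedAddCommGroup E] {ι : Type*} [Fintype ι]
    {u : ι → α → E} (hu : ∀ k, Integrable (u k) μ) :
    Integrable (fun x => √(∑ k, ‖u k x‖ ^ 2)) μ := by
  have hmeas : ∀ k, AEStronglyMeasurable (u k) μ := fun k => (hu k).1
  refine (integrable_finsetSum Finset.univ fun k _ => (hu k).norm).mono' (by fun_prop)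
    (ae_of_all _ fun x => ?_)
  rw [Real.norm_of_nonneg (Real.sqrt_nonneg _), Real.sqrt_le_left (by positivity)]
  exact Finset.sum_sq_le_sq_sum_of_nonneg fun k _ => norm_nonneg _

end

section KernelOperator

variable {X Y : Type*} [MeasurableSpace Y] {ν : Measure Y}
  {K : X → Y → 𝕜} {M : ℝ}

def kernelOp (K : X → Y → 𝕜) (ν : Measure Y) (u : Y → 𝕜) (x : X) : 𝕜 :=
  ∫ y, K x y * u y ∂ν

theorem norm_kernelOp_le (hKM : ∀ x y, ‖K x y‖ ≤ M) {u : Y → 𝕜} (hu : Integrable u ν) (x : X) :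
    ‖kernelOp K ν u x‖ ≤ M * ∫ y, ‖u y‖ ∂ν := by
  rw [← integral_const_mul]
  refine norm_integral_le_of_norm_le (hu.norm.const_mul M) (ae_of_all _ fun y => ?_)
  rw [norm_mul]
  exact mul_le_mul_of_nonneg_right (hKM x y) (norm_nonneg _)

theorem norm_sum_mul_kernelOp_conj_mul_le (hKM : ∀ x y, ‖K x y‖ ≤ M) {ι : Type*} [Fintype ι]
    {v : ι → Y → 𝕜} (hv : ∀ k, MemLp (v k) 2 ν)
    (hortho : Orthonormal 𝕜 fun k => (hv k).toLp (v k)) {G : Y → 𝕜} (hG : MemLp G 2 ν)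
    {x : X} (hKx : AEStronglyMeasurable (K x) ν) (c : ι → 𝕜) :
    ‖∑ k, c k * kernelOp K ν (fun y => conj (G y) * v k y) x‖ ≤
      √(∑ k, ‖c k‖ ^ 2) * (M * √(∫ y, ‖G y‖ ^ 2 ∂ν)) := by
  have hbound : ∀ y, ‖G y * conj (K x y)‖ ≤ M * ‖G y‖ := fun y => by
    rw [norm_mul, RCLike.norm_conj, mul_comm]
    exact mul_le_mul_of_nonneg_right (hKM x y) (norm_nonneg _)
  have hw : MemLp (fun y => G y * conj (K x y)) 2 ν :=
    hG.of_le_mul (hG.1.mul hKx.star) (ae_of_all _ hbound)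
  have hinner : ∀ k, kernelOp K ν (fun y => conj (G y) * v k y) x =
      ⟪hw.toLp _, (hv k).toLp (v k)⟫_𝕜 := fun k => by
    simp only [MemLp.inner_toLp_toLp, kernelOp, RCLike.inner_apply', map_mul, RCLike.conj_conj]
    congr 1 with y
    ring
  have hnorm : ‖hw.toLp _‖ ≤ M * √(∫ y, ‖G y‖ ^ 2 ∂ν) := by
    rw [← hG.norm_toLp_eq_sqrt]
    refine Lp.norm_le_mul_norm_of_ae_le_mul ?_
    filter_upwards [hw.coeFn_toLp, hG.coeFn_toLp] with y hwy hGy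
    rw [hwy, hGy]
    exact hbound y
  simp only [hinner]
  exact (hortho.norm_sum_mul_inner_le c _).trans (by gcongr)

variable [MeasurableSpace X] {μ : Measure X}

theorem aestronglyMeasurable_kernelOp [SFinite ν]
    (hK : AEStronglyMeasurable (uncurry K) (μ.prod ν)) {u : Y → 𝕜}
    (hu : AEStronglyMeasurable u ν) : AEStronglyMeasurable (kernelOp K ν u) μ :=
  (hK.mul hu.comp_snd).integral_prod_right'

theorem memLp_kernelOp_mul [SFinite ν] (hK : AEStronglyMeasurable (uncurry K) (μ.prod ν))
    (hKM : ∀ x y, ‖K x y‖ ≤ M) {u : Y → 𝕜} (hu : Integrable u ν) {p : ℝ≥0∞} {v : X → 𝕜}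
    (hv : MemLp v p μ) : MemLp (fun x => kernelOp K ν u x * v x) p μ :=
  hv.of_le_mul ((aestronglyMeasurable_kernelOp hK hu.1).mul hv.1) <| ae_of_all _ fun x => by
    rw [norm_mul]
    exact mul_le_mul_of_nonneg_right (norm_kernelOp_le hKM hu x) (norm_nonneg _)

theorem integral_mul_kernelOp [SFinite μ] [SFinite ν]
    (hK : AEStronglyMeasurable (uncurry K) (μ.prod ν)) (hKM : ∀ x y, ‖K x y‖ ≤ M)
    {f : X → 𝕜} {u : Y → 𝕜} (hf : Integrable f μ) (hu : Integrable u ν) :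
    ∫ x, f x * kernelOp K ν u x ∂μ = ∫ y, kernelOp (flip K) μ f y * u y ∂ν := by
  have hint : Integrable (uncurry fun x y => f x * (K x y * u y)) (μ.prod ν) := by
    refine ((hf.norm.mul_prod hu.norm).const_mul M).mono'
      (hf.1.comp_fst.mul (hK.mul hu.1.comp_snd)) (ae_of_all _ fun p => ?_)
    simp only [uncurry, norm_mul]
    calc ‖f p.1‖ * (‖K p.1 p.2‖ * ‖u p.2‖) ≤ ‖f p.1‖ * (M * ‖u p.2‖) := by
          gcongr
          exact hKM _ _
      _ = M * (‖f p.1‖ * ‖u p.2‖) := by ring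
  simp only [kernelOp, ← integral_const_mul, ← integral_mul_const]
  rw [integral_integral_swap hint]
  refine integral_congr_ae (ae_of_all _ fun y => integral_congr_ae (ae_of_all _ fun x => ?_))
  simp only [flip]
  ring

theorem integral_conj_mul_sum_kernelOp_mul [SFinite μ] [SFinite ν]
    (hK : AEStronglyMeasurable (uncurry K) (μ.prod ν)) (hKM : ∀ x y, ‖K x y‖ ≤ M)
    {ι : Type*} [Fintype ι] {u : ι → Y → 𝕜} {v : ι → X → 𝕜} {G : X → 𝕜}
    (hu : ∀ k, Integrable (u k) ν) (hv : ∀ k, MemLp (v k) 2 μ) (hG : MemLp G 2 μ) :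
    ∫ x, conj (G x) * ∑ k, kernelOp K ν (u k) x * v k x ∂μ =
      ∫ y, ∑ k, u k y * kernelOp (flip K) μ (fun x => conj (G x) * v k x) y ∂ν := by
  have hGv : ∀ k, Integrable (fun x => conj (G x) * v k x) μ := fun k =>
    hG.star.integrable_mul (hv k)
  have hKt : AEStronglyMeasurable (uncurry (flip K)) (ν.prod μ) := hK.prod_swap
  calc ∫ x, conj (G x) * ∑ k, kernelOp K ν (u k) x * v k x ∂μ
      = ∑ k, ∫ x, (conj (G x) * v k x) * kernelOp K ν (u k) x ∂μ := by
        rw [← integral_finsetSum]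
        · congr 1 with x
          rw [Finset.mul_sum]
          congr 1 with k
          ring
        · exact fun k _ => (hGv k).mul_bdd (aestronglyMeasurable_kernelOp hK (hu k).1)
            (ae_of_all _ (norm_kernelOp_le hKM (hu k)))
    _ = ∑ k, ∫ y, u k y * kernelOp (flip K) μ (fun x => conj (G x) * v k x) y ∂ν := by
        congr 1 with k
        rw [integral_mul_kernelOp hK hKM (hGv k) (hu k)]
        simp only [mul_comm]
    _ = _ := by
        rw [← integral_finsetSum]
        exact fun k _ => (hu k).mul_bdd (aestronglyMeasurable_kernelOp hKt (hGv k).1)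
          (ae_of_all _ (norm_kernelOp_le (fun y x => hKM x y) (hGv k)))

theorem sqrt_integral_norm_sum_kernelOp_mul_sq_le [SFinite μ] [SFinite ν]
    (hK : AEStronglyMeasurable (uncurry K) (μ.prod ν)) (hM : 0 ≤ M)
    (hKM : ∀ x y, ‖K x y‖ ≤ M) {ι : Type*} [Fintype ι] {u : ι → Y → 𝕜} {v : ι → X → 𝕜}
    (hu : ∀ k, Integrable (u k) ν) (hv : ∀ k, MemLp (v k) 2 μ)
    (hortho : Orthonormal 𝕜 fun k => (hv k).toLp (v k)) :
    √(∫ x, ‖∑ k, kernelOp K ν (u k) x * v k x‖ ^ 2 ∂μ) ≤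
      M * ∫ y, √(∑ k, ‖u k y‖ ^ 2) ∂ν := by
  set F := fun x => ∑ k, kernelOp K ν (u k) x * v k x
  set N := √(∫ x, ‖F x‖ ^ 2 ∂μ)
  set R := ∫ y, √(∑ k, ‖u k y‖ ^ 2) ∂ν
  have hF : MemLp F 2 μ := memLp_finsetSum _ fun k _ => memLp_kernelOp_mul hK hKM (hu k) (hv k)
  have key : N ^ 2 ≤ M * R * N := calc
    N ^ 2 = ‖∫ x, conj (F x) * F x ∂μ‖ := by
      rw [integral_conj_mul_self, RCLike.norm_ofReal, abs_of_nonneg (by positivity),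
        Real.sq_sqrt (by positivity)]
    _ = ‖∫ y, ∑ k, u k y * kernelOp (flip K) μ (fun x => conj (F x) * v k x) y ∂ν‖ := by
      rw [integral_conj_mul_sum_kernelOp_mul hK hKM hu hv hF]
    _ ≤ ∫ y, ‖∑ k, u k y * kernelOp (flip K) μ (fun x => conj (F x) * v k x) y‖ ∂ν :=
      norm_integral_le_integral_norm _
    _ ≤ ∫ y, √(∑ k, ‖u k y‖ ^ 2) * (M * N) ∂ν := by
      refine integral_mono_of_nonneg (ae_of_all _ fun y => norm_nonneg _)
        ((integrable_sqrt_sum_sq_norm hu).mul_const _) ?_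
      filter_upwards [hK.prodMk_right] with y hKy
      exact norm_sum_mul_kernelOp_conj_mul_le (fun y x => hKM x y) hv hortho hF hKy _
    _ = M * R * N := by
      rw [integral_mul_const]
      ring
  have hR : 0 ≤ R := integral_nonneg fun y => Real.sqrt_nonneg _
  nlinarith [Real.sqrt_nonneg (∫ x, ‖F x‖ ^ 2 ∂μ), mul_nonneg hM hR]

end KernelOperator

end MeasureTheory

def schrodingerKernel (t : ℝ) (x y : E3) : ℂ :=
  ((4 * Real.pi * t) ^ (-(3 : ℝ) / 2) : ℝ) *
    Complex.exp (Complex.I * ((‖x - y‖ ^ 2 / (4 * t) : ℝ) : ℂ))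

theorem freeProp_eq_kernelOp (t : ℝ) (u : E3 → ℂ) :
    freeProp t u = kernelOp (schrodingerKernel t) volume u := by
  ext x
  simp only [freeProp, kernelOp, schrodingerKernel, mul_assoc, integral_const_mul]

theorem norm_schrodingerKernel {t : ℝ} (ht : 0 ≤ t) (x y : E3) :
    ‖schrodingerKernel t x y‖ = (4 * Real.pi * t) ^ (-(3 : ℝ) / 2) := by
  rw [schrodingerKernel, norm_mul, Complex.norm_exp_I_mul_ofReal, mul_one, Complex.norm_real,
    Real.norm_of_nonneg (by positivity)]

theorem continuous_schrodingerKernel (t : ℝ) : Continuous (uncurry (schrodingerKernel t)) := by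
  unfold schrodingerKernel
  fun_prop

/-- There is an absolute constant `C` such that for every `t > 0`, every finite family
`u₁,…,uₙ ∈ L¹ ∩ L²` and every orthonormal family `v₁,…,vₙ` in `L²(ℝ³;ℂ)`,
`‖Σ_k (e^{itΔ}u_k)·v_k‖_{L²} ≤ C t^{−3/2} ∫ (Σ_k |u_k(y)|²)^{1/2} dy`. -/
theorem stmt6 :
    ∃ C > 0, ∀ (t : ℝ), 0 < t → ∀ (n : ℕ) (u v : Fin n → E3 → ℂ),
      (∀ k, MemLp (u k) 1 volume) → (∀ k, MemLp (u k) 2 volume) →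
      (∀ k, MemLp (v k) 2 volume) →
      (∀ j k, (∫ x, (starRingEnd ℂ) (v j x) * v k x) = if j = k then 1 else 0) →
      Real.sqrt (∫ x, ‖∑ k, freeProp t (u k) x * v k x‖ ^ 2)
        ≤ C * t ^ (-(3 : ℝ) / 2) * ∫ y, Real.sqrt (∑ k, ‖u k y‖ ^ 2) := by
  refine ⟨(4 * Real.pi) ^ (-(3 : ℝ) / 2), by positivity, ?_⟩
  intro t ht n u v hu _ hv hortho
  rw [← Real.mul_rpow (by positivity) ht.le]
  simp only [freeProp_eq_kernelOp]
  exact sqrt_integral_norm_sum_kernelOp_mul_sq_le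
    (continuous_schrodingerKernel t).aestronglyMeasurable (by positivity)
    (fun x y => (norm_schrodingerKernel ht.le x y).le)
    (fun k => memLp_one_iff_integrable.mp (hu k)) hv ((orthonormal_toLp_iff hv).mpr hortho)
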